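/- Let V = F_2^{2n} with n ≥ 3 and plus-type quadratic form Q(x) = Σ_{i=1}^n x_i x_{n+i}, bilinear form (u,v) as above, α = e_1 + f_1, β = e_1 + e_2 + f_2, γ = e_2 + f_2. Then (i) the number of vectors v with Q(v)=1, (α,v)=1 and (β,v)=1 equals 2^{2n-3} - 2^{n-2}, and (ii) the number of vectors v with Q(v)=1, (α,v)=1 and (γ,v)=1 equals 2^{2n-3} - 2^{n-1}. -/
import Mathlib
open Finset

def chi (a : ZMod 2) : ℤ := if a = 0 then 1 else -1

lemma chi_add (a b : ZMod 2) : chi (a + b) = chi a * chi b := by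
  revert a b; decide

lemma chi_sum {ι : Type*} (s : Finset ι) (f : ι → ZMod 2) :
    chi (∑ i ∈ s, f i) = ∏ i ∈ s, chi (f i) := by
  induction s using Finset.cons_induction with
  | empty => simp [chi]
  | cons i s hi ih => rw [Finset.sum_cons, Finset.prod_cons, chi_add, ih]

def EE (n : ℕ) : (Fin (n + n) → ZMod 2) ≃ (Fin n → ZMod 2 × ZMod 2) :=
  (Equiv.arrowCongr finSumFinEquiv.symm (Equiv.refl _)).trans
    ((Equiv.sumArrowEquivProdArrow _ _ _).trans (Equiv.arrowProdEquivProdArrow _ _ _).symm)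

lemma EE_apply (n : ℕ) (v : Fin (n + n) → ZMod 2) (i : Fin n) :
    EE n v i = (v (Fin.castAdd n i), v (Fin.natAdd n i)) := by
  simp [EE, Equiv.arrowCongr, Equiv.sumArrowEquivProdArrow, Equiv.arrowProdEquivProdArrow]

lemma sum_factor (n : ℕ) (f : Fin n → (ZMod 2 × ZMod 2) → ℤ) :
    ∑ v : Fin (n + n) → ZMod 2, ∏ i : Fin n, f i (v (Fin.castAdd n i), v (Fin.natAdd n i))
      = ∏ i : Fin n, ∑ p : ZMod 2 × ZMod 2, f i p := by
  have h1 : ∀ v : Fin (n + n) → ZMod 2,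
      (∏ i : Fin n, f i (v (Fin.castAdd n i), v (Fin.natAdd n i)))
        = (fun w : Fin n → ZMod 2 × ZMod 2 => ∏ i, f i (w i)) (EE n v) := by
    intro v
    simp only [EE_apply]
  rw [Finset.sum_congr rfl (fun v _ => h1 v),
    Equiv.sum_comp (EE n) (fun w : Fin n → ZMod 2 × ZMod 2 => ∏ i, f i (w i)),
    Finset.prod_univ_sum]
  simp

lemma cell_quad (a b : ZMod 2) :
    ∑ p : ZMod 2 × ZMod 2, chi (p.1 * p.2 + a * p.1 + b * p.2) = 2 * chi (a * b) := by
  revert a b; decide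

lemma cell_lin (a b : ZMod 2) (h : ¬(a = 0 ∧ b = 0)) :
    ∑ p : ZMod 2 × ZMod 2, chi (a * p.1 + b * p.2) = 0 := by
  revert a b; decide

lemma sum_chi_quad (n : ℕ) (a b : Fin n → ZMod 2) :
    ∑ v : Fin (n + n) → ZMod 2,
      chi (∑ i : Fin n, (v (Fin.castAdd n i) * v (Fin.natAdd n i)
          + a i * v (Fin.castAdd n i) + b i * v (Fin.natAdd n i)))
      = 2 ^ n * chi (∑ i, a i * b i) := by
  have h1 : ∀ v : Fin (n + n) → ZMod 2,
      chi (∑ i : Fin n, (v (Fin.castAdd n i) * v (Fin.natAdd n i)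
          + a i * v (Fin.castAdd n i) + b i * v (Fin.natAdd n i)))
        = ∏ i : Fin n, (fun i (p : ZMod 2 × ZMod 2) => chi (p.1 * p.2 + a i * p.1 + b i * p.2)) i
            (v (Fin.castAdd n i), v (Fin.natAdd n i)) := by
    intro v; rw [chi_sum]
  rw [Finset.sum_congr rfl (fun v _ => h1 v),
    sum_factor n (fun i (p : ZMod 2 × ZMod 2) => chi (p.1 * p.2 + a i * p.1 + b i * p.2))]
  have h2 : ∀ i : Fin n, (∑ p : ZMod 2 × ZMod 2, chi (p.1 * p.2 + a i * p.1 + b i * p.2))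
      = 2 * chi (a i * b i) := fun i => cell_quad (a i) (b i)
  rw [Finset.prod_congr rfl (fun i _ => h2 i), Finset.prod_mul_distrib, Finset.prod_const,
    Finset.card_univ, Fintype.card_fin, ← chi_sum]

lemma sum_chi_lin (n : ℕ) (a b : Fin n → ZMod 2) (i0 : Fin n) (h : ¬(a i0 = 0 ∧ b i0 = 0)) :
    ∑ v : Fin (n + n) → ZMod 2,
      chi (∑ i : Fin n, (a i * v (Fin.castAdd n i) + b i * v (Fin.natAdd n i))) = 0 := by
  have h1 : ∀ v : Fin (n + n) → ZMod 2,
      chi (∑ i : Fin n, (a i * v (Fin.castAdd n i) + b i * v (Fin.natAdd n i)))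
        = ∏ i : Fin n, (fun i (p : ZMod 2 × ZMod 2) => chi (a i * p.1 + b i * p.2)) i
            (v (Fin.castAdd n i), v (Fin.natAdd n i)) := by
    intro v; rw [chi_sum]
  rw [Finset.sum_congr rfl (fun v _ => h1 v),
    sum_factor n (fun i (p : ZMod 2 × ZMod 2) => chi (a i * p.1 + b i * p.2))]
  exact Finset.prod_eq_zero (Finset.mem_univ i0) (cell_lin (a i0) (b i0) h)

lemma expand3 (a b c : ZMod 2) :
    (1 - chi a) * (1 - chi b) * (1 - chi c)
      = 1 - chi a - chi b - chi c + chi (a + b) + chi (a + c) + chi (b + c) - chi (a + b + c) := by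
  revert a b c; decide

lemma indicator3 (a b c : ZMod 2) :
    (1 - chi a) * (1 - chi b) * (1 - chi c) = if a = 1 ∧ b = 1 ∧ c = 1 then (8 : ℤ) else 0 := by
  revert a b c; decide

lemma count_main (n : ℕ) (a₁ b₁ a₂ b₂ : Fin n → ZMod 2)
    (i₁ : Fin n) (h1 : ¬(a₁ i₁ = 0 ∧ b₁ i₁ = 0))
    (i₂ : Fin n) (h2 : ¬(a₂ i₂ = 0 ∧ b₂ i₂ = 0))
    (i₃ : Fin n) (h3 : ¬(a₁ i₃ + a₂ i₃ = 0 ∧ b₁ i₃ + b₂ i₃ = 0)) :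
    (8 : ℤ) * ({v : Fin (n + n) → ZMod 2 |
        (∑ i : Fin n, v (Fin.castAdd n i) * v (Fin.natAdd n i)) = 1 ∧
        (∑ i : Fin n, (a₁ i * v (Fin.castAdd n i) + b₁ i * v (Fin.natAdd n i))) = 1 ∧
        (∑ i : Fin n, (a₂ i * v (Fin.castAdd n i) + b₂ i * v (Fin.natAdd n i))) = 1}.ncard : ℤ)
    = 4 ^ n - 2 ^ n * (1 - chi (∑ i, a₁ i * b₁ i) - chi (∑ i, a₂ i * b₂ i)
        + chi (∑ i, (a₁ i + a₂ i) * (b₁ i + b₂ i))) := by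
  classical
  set QQ : (Fin (n + n) → ZMod 2) → ZMod 2 :=
    fun v => ∑ i : Fin n, v (Fin.castAdd n i) * v (Fin.natAdd n i) with hQQ
  set L₁ : (Fin (n + n) → ZMod 2) → ZMod 2 :=
    fun v => ∑ i : Fin n, (a₁ i * v (Fin.castAdd n i) + b₁ i * v (Fin.natAdd n i)) with hL1
  set L₂ : (Fin (n + n) → ZMod 2) → ZMod 2 :=
    fun v => ∑ i : Fin n, (a₂ i * v (Fin.castAdd n i) + b₂ i * v (Fin.natAdd n i)) with hL2
  have hcard : ({v : Fin (n + n) → ZMod 2 | QQ v = 1 ∧ L₁ v = 1 ∧ L₂ v = 1}.ncard : ℤ) * 8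
      = ∑ v : Fin (n + n) → ZMod 2, (1 - chi (QQ v)) * (1 - chi (L₁ v)) * (1 - chi (L₂ v)) := by
    rw [Finset.sum_congr rfl (fun v _ => indicator3 (QQ v) (L₁ v) (L₂ v))]
    rw [← Finset.sum_filter, Finset.sum_const, Set.ncard_eq_toFinset_card', Set.toFinset_setOf]
    push_cast
    ring
  have expand := fun v : Fin (n + n) → ZMod 2 => expand3 (QQ v) (L₁ v) (L₂ v)
  rw [show (8:ℤ) * ({v : Fin (n + n) → ZMod 2 | QQ v = 1 ∧ L₁ v = 1 ∧ L₂ v = 1}.ncard : ℤ)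
      = ({v : Fin (n + n) → ZMod 2 | QQ v = 1 ∧ L₁ v = 1 ∧ L₂ v = 1}.ncard : ℤ) * 8 by ring, hcard,
    Finset.sum_congr rfl (fun v _ => expand v)]
  have SQ : ∑ v : Fin (n + n) → ZMod 2, chi (QQ v) = 2 ^ n := by
    have := sum_chi_quad n 0 0
    simp only [Pi.zero_apply, zero_mul, add_zero, Finset.sum_const_zero] at this
    simpa [chi, hQQ] using this
  have SL1 : ∑ v : Fin (n + n) → ZMod 2, chi (L₁ v) = 0 := sum_chi_lin n a₁ b₁ i₁ h1
  have SL2 : ∑ v : Fin (n + n) → ZMod 2, chi (L₂ v) = 0 := sum_chi_lin n a₂ b₂ i₂ h2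
  have key12 : ∀ v : Fin (n + n) → ZMod 2, L₁ v + L₂ v
      = ∑ i : Fin n, ((fun i => a₁ i + a₂ i) i * v (Fin.castAdd n i)
          + (fun i => b₁ i + b₂ i) i * v (Fin.natAdd n i)) := by
    intro v
    rw [hL1, hL2]
    simp only
    rw [← Finset.sum_add_distrib]
    exact Finset.sum_congr rfl (fun i _ => by ring)
  have SL12 : ∑ v : Fin (n + n) → ZMod 2, chi (L₁ v + L₂ v) = 0 := by
    rw [Finset.sum_congr rfl (fun v _ => congrArg chi (key12 v))]
    exact sum_chi_lin n _ _ i₃ h3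
  have keyQ1 : ∀ v : Fin (n + n) → ZMod 2, QQ v + L₁ v
      = ∑ i : Fin n, (v (Fin.castAdd n i) * v (Fin.natAdd n i)
          + a₁ i * v (Fin.castAdd n i) + b₁ i * v (Fin.natAdd n i)) := by
    intro v
    rw [hQQ, hL1]
    simp only
    rw [← Finset.sum_add_distrib]
    exact Finset.sum_congr rfl (fun i _ => by ring)
  have SQ1 : ∑ v : Fin (n + n) → ZMod 2, chi (QQ v + L₁ v) = 2 ^ n * chi (∑ i, a₁ i * b₁ i) := by
    rw [Finset.sum_congr rfl (fun v _ => congrArg chi (keyQ1 v))]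
    exact sum_chi_quad n a₁ b₁
  have keyQ2 : ∀ v : Fin (n + n) → ZMod 2, QQ v + L₂ v
      = ∑ i : Fin n, (v (Fin.castAdd n i) * v (Fin.natAdd n i)
          + a₂ i * v (Fin.castAdd n i) + b₂ i * v (Fin.natAdd n i)) := by
    intro v
    rw [hQQ, hL2]
    simp only
    rw [← Finset.sum_add_distrib]
    exact Finset.sum_congr rfl (fun i _ => by ring)
  have SQ2 : ∑ v : Fin (n + n) → ZMod 2, chi (QQ v + L₂ v) = 2 ^ n * chi (∑ i, a₂ i * b₂ i) := by
    rw [Finset.sum_congr rfl (fun v _ => congrArg chi (keyQ2 v))]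
    exact sum_chi_quad n a₂ b₂
  have keyQ12 : ∀ v : Fin (n + n) → ZMod 2, QQ v + L₁ v + L₂ v
      = ∑ i : Fin n, (v (Fin.castAdd n i) * v (Fin.natAdd n i)
          + (fun i => a₁ i + a₂ i) i * v (Fin.castAdd n i)
          + (fun i => b₁ i + b₂ i) i * v (Fin.natAdd n i)) := by
    intro v
    rw [hQQ, hL1, hL2]
    simp only
    rw [← Finset.sum_add_distrib, ← Finset.sum_add_distrib]
    exact Finset.sum_congr rfl (fun i _ => by ring)
  have SQ12 : ∑ v : Fin (n + n) → ZMod 2, chi (QQ v + L₁ v + L₂ v)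
      = 2 ^ n * chi (∑ i, (a₁ i + a₂ i) * (b₁ i + b₂ i)) := by
    rw [Finset.sum_congr rfl (fun v _ => congrArg chi (keyQ12 v))]
    exact sum_chi_quad n _ _
  have S1 : ∑ _v : Fin (n + n) → ZMod 2, (1 : ℤ) = 4 ^ n := by
    rw [Finset.sum_const, Finset.card_univ]
    have : Fintype.card (Fin (n + n) → ZMod 2) = 2 ^ (n + n) := by
      rw [Fintype.card_fun, Fintype.card_fin]
      rfl
    rw [this]
    rw [show (4:ℤ) ^ n = (2 * 2 : ℤ) ^ n by norm_num, mul_pow, ← pow_add]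
    push_cast
    ring
  simp only [Finset.sum_add_distrib, Finset.sum_sub_distrib, S1, SQ, SL1, SL2, SQ1, SQ2, SL12, SQ12]
  ring
theorem stmt_2 (n : ℕ) (hn : 3 ≤ n)
    (Q : (Fin (n + n) → ZMod 2) → ZMod 2)
    (hQ : ∀ v, Q v = ∑ i : Fin n, v (Fin.castAdd n i) * v (Fin.natAdd n i))
    (B : (Fin (n + n) → ZMod 2) → (Fin (n + n) → ZMod 2) → ZMod 2)
    (hB : ∀ u v, B u v = Q (u + v) + Q u + Q v)
    (α β γ : Fin (n + n) → ZMod 2)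
    (hα : α = Pi.single (Fin.castAdd n ⟨0, by omega⟩) 1 +
              Pi.single (Fin.natAdd n ⟨0, by omega⟩) 1)
    (hβ : β = Pi.single (Fin.castAdd n ⟨0, by omega⟩) 1 +
              Pi.single (Fin.castAdd n ⟨1, by omega⟩) 1 +
              Pi.single (Fin.natAdd n ⟨1, by omega⟩) 1)
    (hγ : γ = Pi.single (Fin.castAdd n ⟨1, by omega⟩) 1 +
              Pi.single (Fin.natAdd n ⟨1, by omega⟩) 1) :
    {v | Q v = 1 ∧ B α v = 1 ∧ B β v = 1}.ncard = 2 ^ (2 * n - 3) - 2 ^ (n - 2) ∧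
    {v | Q v = 1 ∧ B α v = 1 ∧ B γ v = 1}.ncard = 2 ^ (2 * n - 3) - 2 ^ (n - 1) := by
  classical
  obtain ⟨m, rfl⟩ : ∃ m, n = m + 3 := ⟨n - 3, by omega⟩
  have e23 : 2 * (m + 3) - 3 = 2 * m + 3 := by omega
  have e2 : (m + 3) - 2 = m + 1 := by omega
  have e1' : (m + 3) - 1 = m + 2 := by omega
  have hle1 : (2:ℕ) ^ (m + 1) ≤ 2 ^ (2 * m + 3) := Nat.pow_le_pow_right (by norm_num) (by omega)
  have hle2 : (2:ℕ) ^ (m + 2) ≤ 2 ^ (2 * m + 3) := Nat.pow_le_pow_right (by norm_num) (by omega)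
  set i0 : Fin (m + 3) := ⟨0, by omega⟩ with hi0
  set i1 : Fin (m + 3) := ⟨1, by omega⟩ with hi1
  have hi01 : i0 ≠ i1 := by simp [hi0, hi1, Fin.ext_iff]
  have cast_ne_nat : ∀ (i j : Fin (m + 3)), Fin.castAdd (m + 3) i ≠ Fin.natAdd (m + 3) j := by
    intro i j h
    have := congrArg Fin.val h
    simp only [Fin.coe_castAdd, Fin.coe_natAdd] at this
    omega
  have ncast : ∀ (i j : Fin (m + 3)), Fin.natAdd (m + 3) i ≠ Fin.castAdd (m + 3) j := by
    intro i j h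
    exact cast_ne_nat j i h.symm
  have cast_inj : ∀ (i j : Fin (m + 3)), Fin.castAdd (m + 3) i = Fin.castAdd (m + 3) j ↔ i = j := by
    intro i j
    rw [Fin.ext_iff, Fin.ext_iff]
    simp
  have nat_inj : ∀ (i j : Fin (m + 3)), Fin.natAdd (m + 3) i = Fin.natAdd (m + 3) j ↔ i = j := by
    intro i j
    rw [Fin.ext_iff, Fin.ext_iff]
    simp
  -- coordinates of α, β, γ
  have hαc : ∀ i, α (Fin.castAdd (m + 3) i) = if i = i0 then 1 else 0 := by
    intro i
    rw [hα]
    simp only [Pi.add_apply, Pi.single_apply, cast_inj, if_neg (cast_ne_nat i _), add_zero]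
  have hαd : ∀ i, α (Fin.natAdd (m + 3) i) = if i = i0 then 1 else 0 := by
    intro i
    rw [hα]
    simp only [Pi.add_apply, Pi.single_apply, nat_inj, if_neg (ncast i i0), zero_add]
  have hβc : ∀ i, β (Fin.castAdd (m + 3) i) = (if i = i0 then 1 else 0) + (if i = i1 then 1 else 0) := by
    intro i
    rw [hβ]
    simp only [Pi.add_apply, Pi.single_apply, cast_inj, if_neg (cast_ne_nat i _), add_zero]
  have hβd : ∀ i, β (Fin.natAdd (m + 3) i) = if i = i1 then 1 else 0 := by
    intro i
    rw [hβ]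
    simp only [Pi.add_apply, Pi.single_apply, nat_inj, if_neg (ncast i i0),
      if_neg (ncast i i1), zero_add]
  have hγc : ∀ i, γ (Fin.castAdd (m + 3) i) = if i = i1 then 1 else 0 := by
    intro i
    rw [hγ]
    simp only [Pi.add_apply, Pi.single_apply, cast_inj, if_neg (cast_ne_nat i _), add_zero]
  have hγd : ∀ i, γ (Fin.natAdd (m + 3) i) = if i = i1 then 1 else 0 := by
    intro i
    rw [hγ]
    simp only [Pi.add_apply, Pi.single_apply, nat_inj, if_neg (ncast i i1), zero_add]
  -- bilinear form formula
  have hBf : ∀ u v, B u v = ∑ i : Fin (m + 3),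
      (u (Fin.natAdd (m + 3) i) * v (Fin.castAdd (m + 3) i) + u (Fin.castAdd (m + 3) i) * v (Fin.natAdd (m + 3) i)) := by
    intro u v
    rw [hB, hQ, hQ, hQ, ← Finset.sum_add_distrib, ← Finset.sum_add_distrib]
    refine Finset.sum_congr rfl (fun i _ => ?_)
    simp only [Pi.add_apply]
    have key : ∀ a b x y : ZMod 2, (a + x) * (b + y) + a * b + x * y = b * x + a * y := by decide
    exact key _ _ _ _
  -- sum over two support points
  have sum2 : ∀ f : Fin (m + 3) → ZMod 2, (∀ i, i ≠ i0 → i ≠ i1 → f i = 0) →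
      ∑ i, f i = f i0 + f i1 := by
    intro f hf
    rw [← Finset.sum_subset (Finset.subset_univ ({i0, i1} : Finset (Fin (m + 3))))
      (fun x _ hx => by
        simp only [Finset.mem_insert, Finset.mem_singleton, not_or] at hx
        exact hf x hx.1 hx.2)]
    rw [Finset.sum_insert (by simp [hi01]), Finset.sum_singleton]
  -- the two applications of count_main
  have key1 := count_main (m + 3) (fun i => α (Fin.natAdd (m + 3) i)) (fun i => α (Fin.castAdd (m + 3) i))
      (fun i => β (Fin.natAdd (m + 3) i)) (fun i => β (Fin.castAdd (m + 3) i))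
      i0 (by simp only [hαd, if_pos rfl]; exact fun h => one_ne_zero h.1)
      i1 (by simp only [hβd, if_pos rfl]; exact fun h => one_ne_zero h.1)
      i0 (by simp only [hαd, hβd, if_pos rfl, if_neg hi01, add_zero]
             exact fun h => one_ne_zero h.1)
  have key2 := count_main (m + 3) (fun i => α (Fin.natAdd (m + 3) i)) (fun i => α (Fin.castAdd (m + 3) i))
      (fun i => γ (Fin.natAdd (m + 3) i)) (fun i => γ (Fin.castAdd (m + 3) i))
      i0 (by simp only [hαd, if_pos rfl]; exact fun h => one_ne_zero h.1)
      i1 (by simp only [hγd, if_pos rfl]; exact fun h => one_ne_zero h.1)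
      i0 (by simp only [hαd, hγd, if_pos rfl, if_neg hi01, add_zero]
             exact fun h => one_ne_zero h.1)
  -- evaluate the chi arguments
  have sαα : ∑ i : Fin (m + 3), α (Fin.natAdd (m + 3) i) * α (Fin.castAdd (m + 3) i) = 1 := by
    rw [sum2 _ (fun i h0 _ => by rw [hαd, hαc, if_neg h0, zero_mul])]
    simp only [hαd, hαc]
    simp [hi01, Ne.symm hi01]
  have sββ : ∑ i : Fin (m + 3), β (Fin.natAdd (m + 3) i) * β (Fin.castAdd (m + 3) i) = 1 := by
    rw [sum2 _ (fun i _ h1 => by rw [hβd, if_neg h1, zero_mul])]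
    simp only [hβd, hβc]
    simp [hi01, Ne.symm hi01]
  have sγγ : ∑ i : Fin (m + 3), γ (Fin.natAdd (m + 3) i) * γ (Fin.castAdd (m + 3) i) = 1 := by
    rw [sum2 _ (fun i _ h1 => by rw [hγd, if_neg h1, zero_mul])]
    simp only [hγd, hγc]
    simp [hi01, Ne.symm hi01]
  have sαβ : ∑ i : Fin (m + 3), (α (Fin.natAdd (m + 3) i) + β (Fin.natAdd (m + 3) i)) *
      (α (Fin.castAdd (m + 3) i) + β (Fin.castAdd (m + 3) i)) = 1 := by
    rw [sum2 _ (fun i h0 h1 => by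
      simp only [hαd, hβd, hαc, hβc]
      simp [h0, h1])]
    simp only [hαd, hβd, hαc, hβc]
    simp [hi01, Ne.symm hi01]
    decide
  have sαγ : ∑ i : Fin (m + 3), (α (Fin.natAdd (m + 3) i) + γ (Fin.natAdd (m + 3) i)) *
      (α (Fin.castAdd (m + 3) i) + γ (Fin.castAdd (m + 3) i)) = 0 := by
    rw [sum2 _ (fun i h0 h1 => by
      simp only [hαd, hγd, hαc, hγc]
      simp [h0, h1])]
    simp only [hαd, hγd, hαc, hγc]
    simp [hi01, Ne.symm hi01]
    decide
  rw [sαα, sββ, sαβ] at key1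
  rw [sαα, sγγ, sαγ] at key2
  have chi1 : chi 1 = -1 := by decide
  have chi0 : chi 0 = 1 := by decide
  rw [chi1, chi0] at key2
  rw [chi1] at key1
  beta_reduce at key1 key2
  -- identify the sets
  have hset1 : {v | Q v = 1 ∧ B α v = 1 ∧ B β v = 1} =
      {v : Fin ((m + 3) + (m + 3)) → ZMod 2 |
        (∑ i : Fin (m + 3), v (Fin.castAdd (m + 3) i) * v (Fin.natAdd (m + 3) i)) = 1 ∧
        (∑ i : Fin (m + 3), (α (Fin.natAdd (m + 3) i) * v (Fin.castAdd (m + 3) i) +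
            α (Fin.castAdd (m + 3) i) * v (Fin.natAdd (m + 3) i))) = 1 ∧
        (∑ i : Fin (m + 3), (β (Fin.natAdd (m + 3) i) * v (Fin.castAdd (m + 3) i) +
            β (Fin.castAdd (m + 3) i) * v (Fin.natAdd (m + 3) i))) = 1} := by
    ext v
    rw [Set.mem_setOf_eq, Set.mem_setOf_eq, hQ, hBf, hBf]
  have hset2 : {v | Q v = 1 ∧ B α v = 1 ∧ B γ v = 1} =
      {v : Fin ((m + 3) + (m + 3)) → ZMod 2 |
        (∑ i : Fin (m + 3), v (Fin.castAdd (m + 3) i) * v (Fin.natAdd (m + 3) i)) = 1 ∧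
        (∑ i : Fin (m + 3), (α (Fin.natAdd (m + 3) i) * v (Fin.castAdd (m + 3) i) +
            α (Fin.castAdd (m + 3) i) * v (Fin.natAdd (m + 3) i))) = 1 ∧
        (∑ i : Fin (m + 3), (γ (Fin.natAdd (m + 3) i) * v (Fin.castAdd (m + 3) i) +
            γ (Fin.castAdd (m + 3) i) * v (Fin.natAdd (m + 3) i))) = 1} := by
    ext v
    rw [Set.mem_setOf_eq, Set.mem_setOf_eq, hQ, hBf, hBf]
  rw [hset1, hset2]
  rw [e23, e2, e1']
  constructor
  · zify [hle1]
    have h8 : (8 : ℤ) ≠ 0 := by norm_num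
    apply mul_left_cancel₀ h8
    have p1 : (4:ℤ) ^ (m + 3) = 4 ^ m * 64 := by ring
    have p2 : (2:ℤ) ^ (m + 3) = 2 ^ m * 8 := by ring
    have p3 : (2:ℤ) ^ (2 * m + 3) = 4 ^ m * 8 := by
      rw [pow_add, pow_mul]
      norm_num
    have p4 : (2:ℤ) ^ (m + 1) = 2 ^ m * 2 := by ring
    rw [key1, p1, p2, p3, p4]
    ring
  · zify [hle2]
    have h8 : (8 : ℤ) ≠ 0 := by norm_num
    apply mul_left_cancel₀ h8
    have p1 : (4:ℤ) ^ (m + 3) = 4 ^ m * 64 := by ring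
    have p2 : (2:ℤ) ^ (m + 3) = 2 ^ m * 8 := by ring
    have p3 : (2:ℤ) ^ (2 * m + 3) = 4 ^ m * 8 := by
      rw [pow_add, pow_mul]
      norm_num
    have p4 : (2:ℤ) ^ (m + 2) = 2 ^ m * 4 := by ring
    rw [key2, p1, p2, p3, p4]
    ring
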